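/- Let F : ℝⁿ → ℝᵐ be differentiable with Jacobian J, and suppose ‖J(y) − J(z)‖ ≤ κ_lj‖y − z‖, ‖J(y)‖ ≤ κ_lf and ‖F(y)‖ ≤ κ_bf for all y, z ∈ ℝⁿ. Let η₀ ∈ (0,1), x ∈ ℝⁿ, θ > 0, and let J_m ∈ ℝ^{m×n} satisfy ‖J_m‖ ≤ κ_bmj, ‖J_m − J(x)‖ ≤ κ_ej/θ and J_mᵀF(x) ≠ 0. Let d be the LM step for (J_m, F(x), λ) with λ = θ‖J_mᵀF(x)‖, and define ρ = (‖F(x)‖² − ‖F(x + d)‖²)/(‖F(x)‖² − ‖F(x) + J_m d‖²). If θ ≥ (κ_lj κ_bf + κ_lf² + 2κ_bf κ_ej + κ_bmj²)/((1 − η₀)‖J_mᵀF(x)‖), then ρ ≥ η₀. -/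

import Mathlib

open Filter Matrix MeasureTheory

/-- The map `x ↦ A x` from `ℝⁿ` to `ℝᵖ` with the Euclidean (`ℓ²`) structure. -/
noncomputable def mulVecE {p n : ℕ} (A : Matrix (Fin p) (Fin n) ℝ)
    (x : EuclideanSpace ℝ (Fin n)) : EuclideanSpace ℝ (Fin p) :=
  (WithLp.equiv 2 (Fin p → ℝ)).symm (A.mulVec ((WithLp.equiv 2 (Fin n → ℝ)) x))

/-- The spectral norm (ℓ²-operator norm) of a matrix. -/
noncomputable def opNorm {p n : ℕ} (A : Matrix (Fin p) (Fin n) ℝ) : ℝ :=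
  sSup {r : ℝ | ∃ x : EuclideanSpace ℝ (Fin n), ‖x‖ ≤ 1 ∧ r = ‖mulVecE A x‖}

/-- A matrix as a continuous linear map between Euclidean spaces. -/
noncomputable def jacCLM {p n : ℕ} (A : Matrix (Fin p) (Fin n) ℝ) :
    EuclideanSpace ℝ (Fin n) →L[ℝ] EuclideanSpace ℝ (Fin p) :=
  LinearMap.toContinuousLinearMap (Matrix.toEuclideanLin A)

/-!
With `g = Jmᵀ F(x)` and `λ = θ‖g‖`, pairing the LM equation `Jmᵀ Jm d + λ d = -g` with `d`
gives the predicted reduction `‖F(x)‖² - ‖F(x) + Jm d‖² = ‖Jm d‖² + 2λ‖d‖²`, and taking norms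
gives `‖g‖ ≤ (‖Jm‖² + λ)‖d‖`. The lower bound on `θ` forces `‖Jm‖² ≤ λ`, hence `θ⁻¹ ≤ 2‖d‖`,
so the model error `‖F(x + d) - F(x) - Jm d‖ ≤ κlj‖d‖² + (κej/θ)‖d‖` is `O(‖d‖²)`.
The gap between the actual and the predicted reduction is then `O(‖d‖²)` as well, and the
bound on `θ` makes it at most `(1 - η₀)` times the `2λ‖d‖²` part of the predicted reduction.
-/

open scoped InnerProduct InnerProductSpace

theorem norm_sub_sub_fderiv_le_of_lipschitz {E G : Type*} [NormedAddCommGroup E]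
    [NormedSpace ℝ E] [NormedAddCommGroup G] [NormedSpace ℝ G] {F : E → G}
    {F' : E → E →L[ℝ] G} {L : ℝ} (hF : ∀ z, HasFDerivAt F (F' z) z)
    (hF' : ∀ y z, ‖F' y - F' z‖ ≤ L * ‖y - z‖) (hL : 0 ≤ L) (x d : E) :
    ‖F (x + d) - F x - F' x d‖ ≤ L * ‖d‖ ^ 2 := by
  have hx : x ∈ Metric.closedBall x ‖d‖ := Metric.mem_closedBall_self (norm_nonneg d)
  have hxd : x + d ∈ Metric.closedBall x ‖d‖ := by simp
  have hbound : ∀ z ∈ Metric.closedBall x ‖d‖, ‖F' z - F' x‖ ≤ L * ‖d‖ := fun z hz =>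
    (hF' z x).trans (mul_le_mul_of_nonneg_left (mem_closedBall_iff_norm.mp hz) hL)
  have h := (convex_closedBall x ‖d‖).norm_image_sub_le_of_norm_hasFDerivWithin_le'
    (fun z _ => (hF z).hasFDerivWithinAt) hbound hx hxd
  simpa [sq, mul_assoc] using h

theorem norm_sq_sub_norm_add_sq_le {G : Type*} [NormedAddCommGroup G] [InnerProductSpace ℝ G]
    (a b u : G) : ‖b‖ ^ 2 - ‖a + u‖ ^ 2 ≤ 2 * ‖a‖ * ‖b - a - u‖ + ‖b - a‖ ^ 2 - ‖u‖ ^ 2 := by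
  have hb : ‖b‖ ^ 2 = ‖a‖ ^ 2 + 2 * ⟪a, b - a⟫_ℝ + ‖b - a‖ ^ 2 := by
    rw [← norm_add_sq_real, add_sub_cancel]
  have hinner : ⟪a, b - a⟫_ℝ - ⟪a, u⟫_ℝ ≤ ‖a‖ * ‖b - a - u‖ := by
    rw [← inner_sub_right]; exact real_inner_le_norm _ _
  rw [hb, norm_add_sq_real]
  linarith

section LevenbergMarquardt

variable {E G : Type*} [NormedAddCommGroup E] [InnerProductSpace ℝ E] [CompleteSpace E]
  [NormedAddCommGroup G] [InnerProductSpace ℝ G] [CompleteSpace G]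

def IsLMStep (A : E →L[ℝ] G) (r : G) (μ : ℝ) (d : E) : Prop :=
  (A†) (A d) + μ • d = -(A†) r

variable {A : E →L[ℝ] G} {r : G} {μ : ℝ} {d : E}

namespace IsLMStep

lemma ne_zero (hd : IsLMStep A r μ d) (hr : (A†) r ≠ 0) : d ≠ 0 := by
  rintro rfl
  simp only [IsLMStep, map_zero, smul_zero, add_zero, zero_eq_neg] at hd
  exact hr hd

lemma norm_sq_add_mul_norm_sq (hd : IsLMStep A r μ d) :
    ‖A d‖ ^ 2 + μ * ‖d‖ ^ 2 = -⟪r, A d⟫_ℝ := by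
  have h := congrArg (⟪·, d⟫_ℝ) hd
  simp only [inner_add_left, inner_neg_left, real_inner_smul_left,
    ContinuousLinearMap.adjoint_inner_left, real_inner_self_eq_norm_sq] at h
  linarith

lemma norm_sq_sub_norm_add_sq (hd : IsLMStep A r μ d) :
    ‖r‖ ^ 2 - ‖r + A d‖ ^ 2 = ‖A d‖ ^ 2 + 2 * μ * ‖d‖ ^ 2 := by
  rw [norm_add_sq_real]
  linarith [hd.norm_sq_add_mul_norm_sq]

lemma norm_adjoint_le (hd : IsLMStep A r μ d) (hμ : 0 ≤ μ) :
    ‖(A†) r‖ ≤ (‖A‖ ^ 2 + μ) * ‖d‖ := by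
  calc ‖(A†) r‖ = ‖(A† ∘L A) d + μ • d‖ := by rw [← norm_neg, ← hd]; rfl
    _ ≤ ‖A† ∘L A‖ * ‖d‖ + μ * ‖d‖ := by
      grw [norm_add_le, ContinuousLinearMap.le_opNorm, norm_smul, Real.norm_of_nonneg hμ]
    _ = (‖A‖ ^ 2 + μ) * ‖d‖ := by
      rw [ContinuousLinearMap.norm_adjoint_comp_self]; ring

lemma inv_le_two_mul_norm {θ : ℝ} (hd : IsLMStep A r (θ * ‖(A†) r‖) d) (hr : (A†) r ≠ 0)
    (hθ : 0 < θ) (hA : ‖A‖ ^ 2 ≤ θ * ‖(A†) r‖) : θ⁻¹ ≤ 2 * ‖d‖ := by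
  have hr' : 0 < ‖(A†) r‖ := norm_pos_iff.mpr hr
  have h := hd.norm_adjoint_le (by positivity)
  rw [inv_le_iff_one_le_mul₀ hθ]
  nlinarith [norm_nonneg d]

lemma le_reduction_ratio_of_model_error (hd : IsLMStep A r μ d) (hμ : 0 < μ) (hd0 : d ≠ 0)
    {s : G} {b c e η : ℝ}
    (hr : ‖r‖ ≤ b) (hmodel : ‖s - r - A d‖ ≤ e * ‖d‖ ^ 2) (hstep : ‖s - r‖ ≤ c * ‖d‖)
    (hbig : 2 * b * e + c ^ 2 ≤ 2 * (1 - η) * μ) (hη : η ≤ 1) :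
    η ≤ (‖r‖ ^ 2 - ‖s‖ ^ 2) / (‖r‖ ^ 2 - ‖r + A d‖ ^ 2) := by
  have hdpos : 0 < ‖d‖ := norm_pos_iff.mpr hd0
  have hpred := hd.norm_sq_sub_norm_add_sq
  have hactual := norm_sq_sub_norm_add_sq_le r s (A d)
  rw [hpred, le_div_iff₀ (by positivity)]
  have hcross := mul_le_mul hr hmodel (norm_nonneg _) ((norm_nonneg r).trans hr)
  have hstep_sq : ‖s - r‖ ^ 2 ≤ c ^ 2 * ‖d‖ ^ 2 := by
    rw [← mul_pow]; exact pow_le_pow_left₀ (norm_nonneg _) hstep 2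
  have hbig_sq := mul_le_mul_of_nonneg_right hbig (sq_nonneg ‖d‖)
  have hη_sq : η * ‖A d‖ ^ 2 ≤ ‖A d‖ ^ 2 := mul_le_of_le_one_left (sq_nonneg _) hη
  nlinarith

theorem le_reduction_ratio {F : E → G} {F' : E → E →L[ℝ] G} {x : E}
    {κlj κlf κbf κbmj κej η θ : ℝ}
    (hF : ∀ z, HasFDerivAt F (F' z) z) (hF'lip : ∀ y z, ‖F' y - F' z‖ ≤ κlj * ‖y - z‖)
    (hF'b : ∀ y, ‖F' y‖ ≤ κlf) (hFx : ‖F x‖ ≤ κbf) (hη0 : 0 ≤ η) (hη1 : η < 1) (hθ : 0 < θ)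
    (hA : ‖A‖ ≤ κbmj) (hAacc : ‖A - F' x‖ ≤ κej / θ) (hg : (A†) (F x) ≠ 0)
    (hd : IsLMStep A (F x) (θ * ‖(A†) (F x)‖) d)
    (hθbig : (κlj * κbf + κlf ^ 2 + 2 * κbf * κej + κbmj ^ 2) /
      ((1 - η) * ‖(A†) (F x)‖) ≤ θ) :
    η ≤ (‖F x‖ ^ 2 - ‖F (x + d)‖ ^ 2) / (‖F x‖ ^ 2 - ‖F x + A d‖ ^ 2) := by
  set μ := θ * ‖(A†) (F x)‖
  have hμ : 0 < μ := mul_pos hθ (norm_pos_iff.mpr hg)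
  have hd0 : d ≠ 0 := hd.ne_zero hg
  have hκbf : 0 ≤ κbf := (norm_nonneg _).trans hFx
  have hκej : 0 ≤ κej := by
    simpa using (le_div_iff₀ hθ).mp ((norm_nonneg _).trans hAacc)
  have hκlj : 0 ≤ κlj := by
    have := (norm_nonneg _).trans (hF'lip (x + d) x)
    rw [add_sub_cancel_left] at this
    exact nonneg_of_mul_nonneg_left this (norm_pos_iff.mpr hd0)
  have hμbig : κlj * κbf + κlf ^ 2 + 2 * κbf * κej + κbmj ^ 2 ≤ (1 - η) * μ := by
    rw [div_le_iff₀ (mul_pos (by linarith) (norm_pos_iff.mpr hg))] at hθbig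
    linarith
  have hAμ : ‖A‖ ^ 2 ≤ μ := by
    grw [hA]
    nlinarith [mul_nonneg hκlj hκbf, mul_nonneg hκbf hκej]
  have hθinv : θ⁻¹ ≤ 2 * ‖d‖ := hd.inv_le_two_mul_norm hg hθ hAμ
  have hmodel : ‖F (x + d) - F x - A d‖ ≤ (κlj + 2 * κej) * ‖d‖ ^ 2 := calc
    ‖F (x + d) - F x - A d‖ = ‖(F (x + d) - F x - F' x d) - (A - F' x) d‖ := by
      rw [_root_.sub_apply]; abel_nf
    _ ≤ ‖F (x + d) - F x - F' x d‖ + ‖(A - F' x) d‖ := norm_sub_le _ _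
    _ ≤ κlj * ‖d‖ ^ 2 + κej * θ⁻¹ * ‖d‖ := by
      grw [norm_sub_sub_fderiv_le_of_lipschitz hF hF'lip hκlj, ContinuousLinearMap.le_opNorm,
        hAacc, div_eq_mul_inv]
    _ ≤ κlj * ‖d‖ ^ 2 + κej * (2 * ‖d‖) * ‖d‖ := by grw [hθinv]
    _ = (κlj + 2 * κej) * ‖d‖ ^ 2 := by ring
  have hstep : ‖F (x + d) - F x‖ ≤ κlf * ‖d‖ := by
    simpa using convex_univ.norm_image_sub_le_of_norm_hasFDerivWithin_le
      (fun z _ => (hF z).hasFDerivWithinAt) (fun z _ => hF'b z) (Set.mem_univ x)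
      (Set.mem_univ (x + d))
  exact hd.le_reduction_ratio_of_model_error hμ hd0 hFx hmodel hstep
    (by nlinarith [sq_nonneg κlf, sq_nonneg κbmj]) hη1.le

end IsLMStep

end LevenbergMarquardt

lemma mulVecE_eq_jacCLM {p n : ℕ} (A : Matrix (Fin p) (Fin n) ℝ)
    (x : EuclideanSpace ℝ (Fin n)) : mulVecE A x = jacCLM A x := rfl

lemma jacCLM_sub {p n : ℕ} (A B : Matrix (Fin p) (Fin n) ℝ) :
    jacCLM (A - B) = jacCLM A - jacCLM B := by
  simp [jacCLM]

lemma jacCLM_transpose {p n : ℕ} (A : Matrix (Fin p) (Fin n) ℝ) :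
    jacCLM Aᵀ = (jacCLM A)† := by
  rw [ContinuousLinearMap.eq_adjoint_iff]
  intro x y
  simp [jacCLM, ← Matrix.conjTranspose_eq_transpose_of_trivial,
    Matrix.toEuclideanLin_conjTranspose_eq_adjoint, LinearMap.adjoint_inner_left]

lemma opNorm_eq_norm_jacCLM {p n : ℕ} (A : Matrix (Fin p) (Fin n) ℝ) :
    opNorm A = ‖jacCLM A‖ := by
  rw [← (jacCLM A).sSup_unitClosedBall_eq_norm, opNorm]
  congr 1
  ext r
  simp [eq_comm, mulVecE_eq_jacCLM]

lemma isLMStep_jacCLM_iff {p n : ℕ} (A : Matrix (Fin p) (Fin n) ℝ)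
    (r : EuclideanSpace ℝ (Fin p)) (μ : ℝ) (d : EuclideanSpace ℝ (Fin n)) :
    IsLMStep (jacCLM A) r μ d ↔ (Aᵀ * A + μ • 1) *ᵥ d = -(Aᵀ *ᵥ r) := by
  rw [IsLMStep, ← jacCLM_transpose, ← (WithLp.equiv 2 (Fin n → ℝ)).injective.eq_iff,
    Matrix.add_mulVec, ← Matrix.mulVec_mulVec, Matrix.smul_mulVec, Matrix.one_mulVec]
  rfl

/-- If the Jacobian model is first-order accurate and `θ` is large enough,
then the iteration is successful: `ρ ≥ η₀`. -/
theorem large_theta_successful {n m : ℕ}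
    (F : EuclideanSpace ℝ (Fin n) → EuclideanSpace ℝ (Fin m))
    (J : EuclideanSpace ℝ (Fin n) → Matrix (Fin m) (Fin n) ℝ)
    (hF : ∀ z, HasFDerivAt F (jacCLM (J z)) z)
    (κlj κlf κbf : ℝ)
    (hJlip : ∀ y z, opNorm (J y - J z) ≤ κlj * ‖y - z‖)
    (hJb : ∀ y, opNorm (J y) ≤ κlf)
    (hFb : ∀ y, ‖F y‖ ≤ κbf)
    (η₀ : ℝ) (hη₀ : η₀ ∈ Set.Ioo (0 : ℝ) 1)
    (x : EuclideanSpace ℝ (Fin n)) (θ : ℝ) (hθ : 0 < θ)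
    (Jm : Matrix (Fin m) (Fin n) ℝ) (κbmj κej : ℝ)
    (hJmb : opNorm Jm ≤ κbmj)
    (hJmacc : opNorm (Jm - J x) ≤ κej / θ)
    (hJmF : mulVecE Jmᵀ (F x) ≠ 0)
    (d : EuclideanSpace ℝ (Fin n))
    (hd : (Jmᵀ * Jm + (θ * ‖mulVecE Jmᵀ (F x)‖) •
        (1 : Matrix (Fin n) (Fin n) ℝ)).mulVec d = -(Jmᵀ.mulVec (F x)))
    (ρ : ℝ)
    (hρ : ρ = (‖F x‖ ^ 2 - ‖F (x + d)‖ ^ 2) /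
      (‖F x‖ ^ 2 - ‖F x + mulVecE Jm d‖ ^ 2))
    (hθbig : θ ≥ (κlj * κbf + κlf ^ 2 + 2 * κbf * κej + κbmj ^ 2) /
      ((1 - η₀) * ‖mulVecE Jmᵀ (F x)‖)) :
    ρ ≥ η₀ := by
  rw [← isLMStep_jacCLM_iff] at hd
  simp only [opNorm_eq_norm_jacCLM, jacCLM_sub, mulVecE_eq_jacCLM, jacCLM_transpose] at *
  rw [hρ]
  exact hd.le_reduction_ratio hF hJlip hJb (hFb x) hη₀.1.le hη₀.2 hθ hJmb hJmacc hJmF hθbig
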